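/- Let p, q be integers with 1 ≤ p < q. The rewriting relation →_BS is confluent: if w →*_BS u and w →*_BS v then there exists z with u →*_BS z and v →*_BS z. Moreover, two words u, v over {a, a⁻¹, t, t⁻¹} represent the same element of BS(p,q) if and only if they have a common descendant, i.e., there exists a word z with u →*_BS z and v →*_BS z. -/

import Mathlib

inductive Letter : Type
  | a | A | t | T
  deriving DecidableEq

def bsRel (p q : ℤ) : Set (FreeGroup Bool) :=
  {FreeGroup.of true * (FreeGroup.of false) ^ p * (FreeGroup.of true)⁻¹ * (FreeGroup.of false) ^ (-q)}

abbrev BS (p q : ℤ) := PresentedGroup (bsRel p q)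

def evalLetter (p q : ℤ) : Letter → BS p q
  | .a => PresentedGroup.of false
  | .A => (PresentedGroup.of false)⁻¹
  | .t => PresentedGroup.of true
  | .T => (PresentedGroup.of true)⁻¹

def eval (p q : ℤ) (w : List Letter) : BS p q := (w.map (evalLetter p q)).prod

def aPow (α : ℤ) : List Letter :=
  if 0 ≤ α then List.replicate α.toNat Letter.a else List.replicate (-α).toNat Letter.A

def Geodesic (p q : ℤ) (w : List Letter) : Prop :=
  ∀ v : List Letter, eval p q v = eval p q w → w.length ≤ v.length

/-- Ranking of letters in the order `t < T < a < A`. -/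
def letterIdx : Letter → ℕ
  | .t => 0
  | .T => 1
  | .a => 2
  | .A => 3

/-- Length-lexicographical strict order on words, with letters ordered `t < T < a < A`. -/
def llLt (u v : List Letter) : Prop :=
  u.length < v.length ∨
    (u.length = v.length ∧ List.Lex (· < ·) (u.map letterIdx) (v.map letterIdx))

/-- `IsLlnf p q v w` : `v` is the length-lexicographical normal form of `w`,
i.e. `v` represents the same element as `w` and no word representing this element
precedes `v` in the length-lexicographical order. -/
def IsLlnf (p q : ℤ) (v w : List Letter) : Prop :=
  eval p q v = eval p q w ∧ ∀ u : List Letter, eval p q u = eval p q w → ¬ llLt u v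

/-- A word contains no factors `a a⁻¹` or `a⁻¹ a`. -/
def Reduced (w : List Letter) : Prop :=
  (∀ u v : List Letter, w ≠ u ++ [Letter.a, Letter.A] ++ v) ∧
  (∀ u v : List Letter, w ≠ u ++ [Letter.A, Letter.a] ++ v)

/-- A word is Britton-reduced: it has no factors `a a⁻¹`, `a⁻¹ a`,
`t a^{pμ} t⁻¹` or `t⁻¹ a^{qμ} t` (with `μ ∈ ℤ`). -/
def BrittonReduced (p q : ℤ) (w : List Letter) : Prop :=
  Reduced w ∧
  (∀ u v : List Letter, ∀ μ : ℤ, w ≠ u ++ [Letter.t] ++ aPow (p * μ) ++ [Letter.T] ++ v) ∧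
  (∀ u v : List Letter, ∀ μ : ℤ, w ≠ u ++ [Letter.T] ++ aPow (q * μ) ++ [Letter.t] ++ v)

/-- The t-sequence of a word: its subsequence of letters from `{t, t⁻¹}`. -/
def tSeq (w : List Letter) : List Letter :=
  w.filter (fun c => c == Letter.t || c == Letter.T)

/-- The geodesic length of a group element: the least length of a word representing it. -/
noncomputable def geodesicLength (p q : ℤ) (g : BS p q) : ℕ :=
  sInf {n : ℕ | ∃ w : List Letter, eval p q w = g ∧ w.length = n}

/-- A valley: every prefix has height `≤ 0` and the total height is `0`,
where the height of a prefix is (number of `t`'s) − (number of `t⁻¹`'s). -/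
def IsValley (w : List Letter) : Prop :=
  (∀ u v : List Letter, w = u ++ v → u.count Letter.t ≤ u.count Letter.T) ∧
  w.count Letter.t = w.count Letter.T


/-- The rules of the string rewriting system `BS`. -/
def bsRules (p q : ℤ) : List (List Letter × List Letter) :=
  [([Letter.a, Letter.A], []),
   ([Letter.A, Letter.a], []),
   ([Letter.t, Letter.T], []),
   ([Letter.T, Letter.t], []),
   (List.replicate q.toNat Letter.a ++ [Letter.t], Letter.t :: List.replicate p.toNat Letter.a),
   ([Letter.A, Letter.t],
     List.replicate (q - 1).toNat Letter.a ++ [Letter.t] ++ List.replicate p.toNat Letter.A),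
   (List.replicate p.toNat Letter.a ++ [Letter.T], Letter.T :: List.replicate q.toNat Letter.a),
   ([Letter.A, Letter.T],
     List.replicate (p - 1).toNat Letter.a ++ [Letter.T] ++ List.replicate q.toNat Letter.A)]

/-- One rewriting step of the system `BS`: replace a factor that is a left-hand
side of a rule by the corresponding right-hand side. -/
def Step (p q : ℤ) (u v : List Letter) : Prop :=
  ∃ (x y l r : List Letter), (l, r) ∈ bsRules p q ∧ u = x ++ l ++ y ∧ v = x ++ r ++ y


/-!
Reading a word from left to right while pushing powers of `a` to the right through each stable
letter, `a^e t = a^(e % q) t a^(p (e / q))` and `a^e t⁻¹ = a^(e % p) t⁻¹ a^(q (e / p))`, and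
cancelling every pinch `t^∓1 a^0 t^±1` as it appears, computes a normal form. Each of these moves
is realised by the rewriting system, so every word rewrites to its normal form. The same moves,
read as maps on normal forms, form a right action of `BS p q` (van der Waerden's trick), so words
representing the same element have the same normal form. Hence two words are joinable if and only
if they are equal in the group, and since rewriting preserves the element represented, this gives
confluence.
-/

open Letter List Relation

def Letter.inv : Letter → Letter
  | a => A
  | A => a
  | t => T
  | T => t

def stable : Bool → Letter
  | true => t
  | false => T

def modulus (p q : ℤ) : Bool → ℤ
  | true => q
  | false => p

def transfer (p q : ℤ) : Bool → ℤ
  | true => p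
  | false => q

theorem stable_not (s : Bool) : stable (!s) = (stable s).inv := by cases s <;> rfl

theorem modulus_not (p q : ℤ) (s : Bool) : modulus p q (!s) = transfer p q s := by cases s <;> rfl

theorem transfer_not (p q : ℤ) (s : Bool) : transfer p q (!s) = modulus p q s := by
  cases s <;> rfl

theorem modulus_pos {p q : ℤ} (hp : 0 < p) (hq : 0 < q) (s : Bool) : 0 < modulus p q s := by
  cases s <;> assumption

section APow

theorem aPow_of_nonneg {n : ℤ} (h : 0 ≤ n) : aPow n = replicate n.toNat a := by
  simp [aPow, h]

theorem aPow_of_nonpos {n : ℤ} (h : n ≤ 0) : aPow n = replicate (-n).toNat A := by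
  rcases h.eq_or_lt with rfl | h
  · simp [aPow]
  · simp [aPow, h.not_ge]

theorem aPow_zero : aPow 0 = [] := by simp [aPow]

theorem aPow_add_one {n : ℤ} (h : 0 ≤ n) : aPow (n + 1) = aPow n ++ [a] := by
  rw [aPow_of_nonneg h, aPow_of_nonneg (by omega), ← replicate_succ']
  congr 1
  omega

theorem aPow_sub_one {n : ℤ} (h : n ≤ 0) : aPow (n - 1) = aPow n ++ [A] := by
  rw [aPow_of_nonpos h, aPow_of_nonpos (by omega), ← replicate_succ']
  congr 1
  omega

theorem aPow_add {m n : ℤ} (hm : 0 ≤ m) (hn : 0 ≤ n) : aPow (m + n) = aPow m ++ aPow n := by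
  rw [aPow_of_nonneg hm, aPow_of_nonneg hn, aPow_of_nonneg (by omega), ← replicate_add,
    Int.toNat_add hm hn]

end APow

section Rules

variable {p q : ℤ}

def powRule (p q : ℤ) (s : Bool) : List Letter × List Letter :=
  (aPow (modulus p q s) ++ [stable s], stable s :: aPow (transfer p q s))

def invRule (p q : ℤ) (s : Bool) : List Letter × List Letter :=
  ([A, stable s], aPow (modulus p q s - 1) ++ stable s :: aPow (-transfer p q s))

theorem bsRules_eq (hp : 0 < p) (hq : 0 < q) :
    bsRules p q = [([a, a.inv], []), ([A, A.inv], []), ([t, t.inv], []), ([T, T.inv], []),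
      powRule p q true, invRule p q true, powRule p q false, invRule p q false] := by
  simp only [powRule, invRule, modulus, transfer, stable, Letter.inv]
  rw [aPow_of_nonneg hq.le, aPow_of_nonneg hp.le, aPow_of_nonneg (by omega : 0 ≤ q - 1),
    aPow_of_nonneg (by omega : 0 ≤ p - 1), aPow_of_nonpos (by omega : -p ≤ 0),
    aPow_of_nonpos (by omega : -q ≤ 0), neg_neg, neg_neg]
  simp [bsRules]

theorem cancel_mem_bsRules (c : Letter) : ([c, c.inv], []) ∈ bsRules p q := by
  cases c <;> simp [bsRules, Letter.inv]

theorem powRule_mem_bsRules (hp : 0 < p) (hq : 0 < q) (s : Bool) :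
    powRule p q s ∈ bsRules p q := by
  rw [bsRules_eq hp hq]
  cases s <;> simp

theorem invRule_mem_bsRules (hp : 0 < p) (hq : 0 < q) (s : Bool) :
    invRule p q s ∈ bsRules p q := by
  rw [bsRules_eq hp hq]
  cases s <;> simp

end Rules

section Rewriting

variable {p q : ℤ}

theorem Step.append_left {u v : List Letter} (z : List Letter) (h : Step p q u v) :
    Step p q (z ++ u) (z ++ v) := by
  obtain ⟨x, y, l, r, hm, rfl, rfl⟩ := h
  exact ⟨z ++ x, y, l, r, hm, by simp, by simp⟩

theorem Step.append_right {u v : List Letter} (z : List Letter) (h : Step p q u v) :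
    Step p q (u ++ z) (v ++ z) := by
  obtain ⟨x, y, l, r, hm, rfl, rfl⟩ := h
  exact ⟨x, y ++ z, l, r, hm, by simp, by simp⟩

theorem reflTransGen_step_append {u u' v v' : List Letter} (hu : ReflTransGen (Step p q) u u')
    (hv : ReflTransGen (Step p q) v v') : ReflTransGen (Step p q) (u ++ v) (u' ++ v') :=
  (hu.lift (· ++ v) fun _ _ h => h.append_right v).trans
    (hv.lift (u' ++ ·) fun _ _ h => h.append_left u')

theorem reflTransGen_step_of_mem {rule : List Letter × List Letter} (h : rule ∈ bsRules p q) :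
    ReflTransGen (Step p q) rule.1 rule.2 :=
  .single ⟨[], [], rule.1, rule.2, h, by simp, by simp⟩

theorem step_cancel (u v : List Letter) (c : Letter) : Step p q (u ++ [c, c.inv] ++ v) (u ++ v) :=
  ⟨u, v, _, _, cancel_mem_bsRules c, rfl, by simp⟩

theorem reflTransGen_aPow_append_a (n : ℤ) :
    ReflTransGen (Step p q) (aPow n ++ [a]) (aPow (n + 1)) := by
  rcases le_or_gt 0 n with h | h
  · rw [aPow_add_one h]
  · have hn := aPow_sub_one (n := n + 1) (by omega)
    rw [add_sub_cancel_right] at hn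
    rw [hn, append_assoc]
    exact .single (by simpa [Letter.inv] using step_cancel (p := p) (q := q) (aPow (n + 1)) [] A)

theorem reflTransGen_aPow_append_A (n : ℤ) :
    ReflTransGen (Step p q) (aPow n ++ [A]) (aPow (n - 1)) := by
  rcases le_or_gt n 0 with h | h
  · rw [aPow_sub_one h]
  · have hn := aPow_add_one (n := n - 1) (by omega)
    rw [sub_add_cancel] at hn
    rw [hn, append_assoc]
    exact .single (by simpa [Letter.inv] using step_cancel (p := p) (q := q) (aPow (n - 1)) [] a)

theorem reflTransGen_aPow_append_aPow (m n : ℤ) :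
    ReflTransGen (Step p q) (aPow m ++ aPow n) (aPow (m + n)) := by
  induction n using Int.induction_on with
  | zero => simpa [aPow_zero] using .refl
  | succ n ih =>
    rw [aPow_add_one (by omega), ← append_assoc, ← add_assoc]
    exact (reflTransGen_step_append ih .refl).trans (reflTransGen_aPow_append_a _)
  | pred n ih =>
    rw [aPow_sub_one (by omega), ← append_assoc, ← add_sub_assoc]
    exact (reflTransGen_step_append ih .refl).trans (reflTransGen_aPow_append_A _)

theorem reflTransGen_aPow_add_modulus_append_stable (hp : 0 < p) (hq : 0 < q) (s : Bool) {e : ℤ}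
    (he : 0 ≤ e) :
    ReflTransGen (Step p q) (aPow (e + modulus p q s) ++ [stable s])
      (aPow e ++ stable s :: aPow (transfer p q s)) := by
  rw [aPow_add he (modulus_pos hp hq s).le, append_assoc]
  exact reflTransGen_step_append .refl (reflTransGen_step_of_mem (powRule_mem_bsRules hp hq s))

theorem reflTransGen_aPow_append_stable_of_neg (hp : 0 < p) (hq : 0 < q) (s : Bool) {e : ℤ}
    (he : e < 0) :
    ReflTransGen (Step p q) (aPow e ++ [stable s])
      (aPow (e + modulus p q s) ++ stable s :: aPow (-transfer p q s)) := by
  have he' := aPow_sub_one (n := e + 1) (by omega)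
  rw [add_sub_cancel_right] at he'
  have hsplit : e + modulus p q s = (e + 1) + (modulus p q s - 1) := by ring
  rw [he', append_assoc, hsplit]
  refine (reflTransGen_step_append .refl
    (reflTransGen_step_of_mem (invRule_mem_bsRules hp hq s))).trans ?_
  rw [invRule, ← append_assoc]
  exact reflTransGen_step_append (reflTransGen_aPow_append_aPow _ _) .refl

theorem reflTransGen_aPow_add_modulus_mul_append_stable (hp : 0 < p) (hq : 0 < q) (s : Bool)
    {r : ℤ} (hr : 0 ≤ r) (hrs : r < modulus p q s) (m : ℤ) :
    ReflTransGen (Step p q) (aPow (r + modulus p q s * m) ++ [stable s])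
      (aPow r ++ stable s :: aPow (transfer p q s * m)) := by
  have hb := modulus_pos hp hq s
  have append_aPow : ∀ {u : List Letter} {m d : ℤ},
      ReflTransGen (Step p q) (u ++ [stable s]) (aPow r ++ stable s :: aPow m) →
      ReflTransGen (Step p q) (u ++ stable s :: aPow d) (aPow r ++ stable s :: aPow (m + d)) :=
    fun {_ _ d} h => by
      have h' := reflTransGen_step_append h (.refl : ReflTransGen (Step p q) (aPow d) _)
      simp only [append_assoc, cons_append] at h'
      exact h'.trans (reflTransGen_step_append .refl
        (reflTransGen_step_append (u := [stable s]) .refl (reflTransGen_aPow_append_aPow _ _)))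
  induction m using Int.induction_on with
  | zero => simpa [aPow_zero] using .refl
  | succ m ih =>
    rw [mul_add_one, ← add_assoc, mul_add_one]
    exact (reflTransGen_aPow_add_modulus_append_stable hp hq s (by positivity)).trans
      (append_aPow ih)
  | pred m ih =>
    have hneg : r + modulus p q s * (-m - 1) < 0 := by nlinarith
    refine (reflTransGen_aPow_append_stable_of_neg hp hq s hneg).trans ?_
    rw [show r + modulus p q s * (-m - 1) + modulus p q s = r + modulus p q s * -m by ring,
      show transfer p q s * (-m - 1) = transfer p q s * -m + -transfer p q s by ring]
    exact append_aPow ih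

theorem reflTransGen_aPow_append_stable (hp : 0 < p) (hq : 0 < q) (s : Bool) (e : ℤ) :
    ReflTransGen (Step p q) (aPow e ++ [stable s])
      (aPow (e % modulus p q s) ++ stable s :: aPow (transfer p q s * (e / modulus p q s))) := by
  have hb := modulus_pos hp hq s
  conv_lhs => rw [← Int.emod_add_mul_ediv e (modulus p q s)]
  exact reflTransGen_aPow_add_modulus_mul_append_stable hp hq s (Int.emod_nonneg e hb.ne')
    (Int.emod_lt_of_pos e hb) _

end Rewriting

section NormalForm

/-- The state `([(k₁, s₁), …, (kₙ, sₙ)], e)` stands for the word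
`a^kₙ σₙ ⋯ a^k₁ σ₁ a^e`, where `σᵢ = stable sᵢ`: syllables are listed from right to left. -/
abbrev NFState := List (ℤ × Bool) × ℤ

def syllablesWord : List (ℤ × Bool) → List Letter
  | [] => []
  | (k, s) :: ss => syllablesWord ss ++ aPow k ++ [stable s]

def stateWord (st : NFState) : List Letter := syllablesWord st.1 ++ aPow st.2

def consSyllable (k : ℤ) (s : Bool) (e : ℤ) : List (ℤ × Bool) → NFState
  | [] => ([(k, s)], e)
  | (k', s') :: ss => if k = 0 ∧ s' = !s then (ss, k' + e) else ((k, s) :: (k', s') :: ss, e)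

def pushStable (p q : ℤ) (s : Bool) (st : NFState) : NFState :=
  consSyllable (st.2 % modulus p q s) s (transfer p q s * (st.2 / modulus p q s)) st.1

def pushLetter (p q : ℤ) (st : NFState) : Letter → NFState
  | a => (st.1, st.2 + 1)
  | A => (st.1, st.2 - 1)
  | t => pushStable p q true st
  | T => pushStable p q false st

def nfState (p q : ℤ) (w : List Letter) : NFState := w.foldl (pushLetter p q) ([], 0)

def normalForm (p q : ℤ) (w : List Letter) : List Letter := stateWord (nfState p q w)

variable {p q : ℤ}

theorem reflTransGen_stateWord_consSyllable (k : ℤ) (s : Bool) (e : ℤ) (ss : List (ℤ × Bool)) :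
    ReflTransGen (Step p q) (syllablesWord ss ++ aPow k ++ stable s :: aPow e)
      (stateWord (consSyllable k s e ss)) := by
  cases ss with
  | nil => simpa [consSyllable, stateWord, syllablesWord] using .refl
  | cons x ss =>
    obtain ⟨k', s'⟩ := x
    by_cases hpinch : k = 0 ∧ s' = !s
    · obtain ⟨rfl, rfl⟩ := hpinch
      have hcancel := step_cancel (p := p) (q := q) (syllablesWord ss ++ aPow k') (aPow e)
        (stable (!s))
      rw [← stable_not, Bool.not_not] at hcancel
      refine .head (by simpa [syllablesWord, aPow_zero] using hcancel) ?_
      simpa [consSyllable, stateWord] using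
        reflTransGen_step_append .refl (reflTransGen_aPow_append_aPow k' e)
    · simpa [consSyllable, hpinch, stateWord, syllablesWord] using .refl

theorem reflTransGen_stateWord_append (hp : 0 < p) (hq : 0 < q) (st : NFState) (c : Letter) :
    ReflTransGen (Step p q) (stateWord st ++ [c]) (stateWord (pushLetter p q st c)) := by
  have stable_case (s : Bool) : ReflTransGen (Step p q) (stateWord st ++ [stable s])
      (stateWord (pushStable p q s st)) := by
    have h := reflTransGen_step_append (.refl : ReflTransGen (Step p q) (syllablesWord st.1) _)
      (reflTransGen_aPow_append_stable hp hq s st.2)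
    have h' := reflTransGen_stateWord_consSyllable (p := p) (q := q) (st.2 % modulus p q s) s
      (transfer p q s * (st.2 / modulus p q s)) st.1
    rw [append_assoc] at h'
    rw [stateWord, append_assoc]
    exact h.trans h'
  cases c
  · simpa [stateWord, pushLetter] using
      reflTransGen_step_append .refl (reflTransGen_aPow_append_a st.2)
  · simpa [stateWord, pushLetter] using
      reflTransGen_step_append .refl (reflTransGen_aPow_append_A st.2)
  · exact stable_case true
  · exact stable_case false

theorem reflTransGen_normalForm (hp : 0 < p) (hq : 0 < q) (w : List Letter) :
    ReflTransGen (Step p q) w (normalForm p q w) := by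
  induction w using reverseRecOn with
  | nil => simpa [normalForm, nfState, stateWord, syllablesWord, aPow_zero] using .refl
  | append_singleton w c ih =>
    rw [normalForm, nfState, foldl_append, foldl_cons, foldl_nil]
    exact (reflTransGen_step_append ih .refl).trans (reflTransGen_stateWord_append hp hq _ c)

end NormalForm

section Evaluation

variable {p q : ℤ}

theorem eval_nil : eval p q [] = 1 := rfl

theorem eval_cons (c : Letter) (w : List Letter) :
    eval p q (c :: w) = evalLetter p q c * eval p q w := by
  simp [eval]

theorem eval_append (u v : List Letter) : eval p q (u ++ v) = eval p q u * eval p q v := by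
  simp [eval]

theorem evalLetter_inv (c : Letter) : evalLetter p q c.inv = (evalLetter p q c)⁻¹ := by
  cases c <;> simp [Letter.inv, evalLetter]

theorem eval_aPow (n : ℤ) : eval p q (aPow n) = evalLetter p q a ^ n := by
  rcases le_or_gt 0 n with h | h
  · rw [aPow_of_nonneg h, eval, map_replicate, prod_replicate, ← zpow_natCast,
      Int.toNat_of_nonneg h]
  · rw [aPow_of_nonpos h.le, eval, map_replicate, prod_replicate, ← zpow_natCast,
      Int.toNat_of_nonneg (by omega), evalLetter, evalLetter, inv_zpow', neg_neg]

theorem evalLetter_t_conj_a_zpow :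
    evalLetter p q t * evalLetter p q a ^ p * (evalLetter p q t)⁻¹ = evalLetter p q a ^ q := by
  have h := PresentedGroup.one_of_mem (rels := bsRel p q) rfl
  simp only [map_mul, map_inv, map_zpow] at h
  exact mul_inv_eq_one.mp (by rwa [zpow_neg] at h)

theorem evalLetter_a_zpow_modulus_mul_stable (s : Bool) :
    evalLetter p q a ^ modulus p q s * evalLetter p q (stable s)
      = evalLetter p q (stable s) * evalLetter p q a ^ transfer p q s := by
  have h := evalLetter_t_conj_a_zpow (p := p) (q := q)
  cases s <;> simp only [modulus, transfer, stable, evalLetter] at h ⊢ <;> rw [← h] <;> group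

theorem eval_powRule (s : Bool) : eval p q (powRule p q s).1 = eval p q (powRule p q s).2 := by
  simpa [powRule, eval_append, eval_cons, eval_aPow, eval_nil] using
    evalLetter_a_zpow_modulus_mul_stable s

theorem eval_invRule (s : Bool) : eval p q (invRule p q s).1 = eval p q (invRule p q s).2 := by
  set α := evalLetter p q a
  set σ := evalLetter p q (stable s)
  have h : σ * α ^ (-transfer p q s) = α ^ (-modulus p q s) * σ := by
    rw [zpow_neg, zpow_neg, eq_inv_mul_iff_mul_eq, ← mul_assoc,
      evalLetter_a_zpow_modulus_mul_stable, mul_inv_cancel_right]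
  simp only [invRule, eval_append, eval_cons, eval_aPow, eval_nil, mul_one]
  rw [h, ← mul_assoc, ← zpow_add, show modulus p q s - 1 + -modulus p q s = -1 by ring,
    zpow_neg_one]
  rfl

theorem eval_eq_of_mem_bsRules (hp : 0 < p) (hq : 0 < q) :
    ∀ rule ∈ bsRules p q, eval p q rule.1 = eval p q rule.2 := by
  rw [bsRules_eq hp hq]
  have eval_cancel (c : Letter) : eval p q [c, c.inv] = eval p q [] := by
    simp [eval_cons, evalLetter_inv, eval_nil]
  simp only [forall_mem_cons, not_mem_nil, IsEmpty.forall_iff, implies_true, and_true]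
  exact ⟨eval_cancel a, eval_cancel A, eval_cancel t, eval_cancel T, eval_powRule true,
    eval_invRule true, eval_powRule false, eval_invRule false⟩

theorem eval_eq_of_reflTransGen (hp : 0 < p) (hq : 0 < q) {u v : List Letter}
    (h : ReflTransGen (Step p q) u v) : eval p q u = eval p q v := by
  induction h with
  | refl => rfl
  | tail _ hstep ih =>
    obtain ⟨x, y, l, r, hrule, rfl, rfl⟩ := hstep
    rw [ih, eval_append, eval_append, eval_append, eval_append,
      eval_eq_of_mem_bsRules hp hq (l, r) hrule]

end Evaluation

section Action

variable {p q : ℤ}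

/-- Exponents are reduced coset representatives and there is no pinch `σ⁻¹ a^0 σ`. -/
def IsNormalSyllables (p q : ℤ) (ss : List (ℤ × Bool)) : Prop :=
  (∀ x ∈ ss, 0 ≤ x.1 ∧ x.1 < modulus p q x.2) ∧ ss.IsChain (fun x y => x.1 = 0 → y.2 ≠ !x.2)

theorem consSyllable_of_isChain {k : ℤ} {s : Bool} {e : ℤ} {ss : List (ℤ × Bool)}
    (h : ((k, s) :: ss).IsChain (fun x y => x.1 = 0 → y.2 ≠ !x.2)) :
    consSyllable k s e ss = ((k, s) :: ss, e) := by
  cases ss with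
  | nil => rfl
  | cons x ss =>
    have hx := (isChain_cons_cons.mp h).1
    exact if_neg fun ⟨hk, hs⟩ => hx hk hs

theorem consSyllable_add (k : ℤ) (s : Bool) (e d : ℤ) (ss : List (ℤ × Bool)) :
    consSyllable k s (e + d) ss = ((consSyllable k s e ss).1, (consSyllable k s e ss).2 + d) := by
  cases ss with
  | nil => rfl
  | cons x ss =>
    simp only [consSyllable]
    split_ifs <;> simp [add_assoc]

theorem isNormalSyllables_consSyllable {k : ℤ} {s : Bool} {e : ℤ} {ss : List (ℤ × Bool)}
    (hss : IsNormalSyllables p q ss) (hk : 0 ≤ k) (hks : k < modulus p q s) :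
    IsNormalSyllables p q (consSyllable k s e ss).1 := by
  obtain ⟨hbound, hchain⟩ := hss
  cases ss with
  | nil => exact ⟨by simp [consSyllable, hk, hks], isChain_singleton _⟩
  | cons x ss =>
    obtain ⟨k', s'⟩ := x
    simp only [consSyllable]
    split_ifs with hpinch
    · exact ⟨fun y hy => hbound y (mem_cons_of_mem _ hy), hchain.tail⟩
    · refine ⟨?_, isChain_cons_cons.mpr ⟨fun hk0 hs => hpinch ⟨hk0, hs⟩, hchain⟩⟩
      intro y hy
      rcases mem_cons.mp hy with rfl | hy
      · exact ⟨hk, hks⟩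
      · exact hbound y hy

theorem pushStable_of_lt (hp : 0 < p) (hq : 0 < q) (s : Bool) {k : ℤ} (hk : 0 ≤ k)
    (hks : k < modulus p q s) (m : ℤ) (ss : List (ℤ × Bool)) :
    pushStable p q s (ss, k + modulus p q s * m) = consSyllable k s (transfer p q s * m) ss := by
  have hb := modulus_pos hp hq s
  rw [pushStable, Int.add_mul_emod_self_left, Int.emod_eq_of_lt hk hks,
    Int.add_mul_ediv_left _ _ hb.ne', Int.ediv_eq_zero_of_lt hk hks, zero_add]

theorem IsNormalSyllables.pushStable (hp : 0 < p) (hq : 0 < q) (s : Bool) {st : NFState}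
    (h : IsNormalSyllables p q st.1) : IsNormalSyllables p q (pushStable p q s st).1 :=
  have hb := modulus_pos hp hq s
  isNormalSyllables_consSyllable h (Int.emod_nonneg _ hb.ne') (Int.emod_lt_of_pos _ hb)

theorem pushStable_add_modulus (hp : 0 < p) (hq : 0 < q) (s : Bool) (ss : List (ℤ × Bool))
    (e : ℤ) : pushStable p q s (ss, e + modulus p q s)
      = ((pushStable p q s (ss, e)).1, (pushStable p q s (ss, e)).2 + transfer p q s) := by
  have hb := modulus_pos hp hq s
  simp only [pushStable]
  rw [Int.add_emod_right, Int.add_ediv_of_dvd_right dvd_rfl, Int.ediv_self hb.ne', mul_add_one,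
    consSyllable_add]

theorem pushStable_not_cons (hp : 0 < p) (hq : 0 < q) (s : Bool) (r m : ℤ)
    (ss : List (ℤ × Bool)) :
    pushStable p q (!s) ((r, s) :: ss, transfer p q s * m) = (ss, r + modulus p q s * m) := by
  have h := pushStable_of_lt hp hq (!s) le_rfl (modulus_pos hp hq (!s)) m ((r, s) :: ss)
  rw [modulus_not, transfer_not, zero_add] at h
  simp [h, consSyllable]

theorem pushStable_not_pushStable (hp : 0 < p) (hq : 0 < q) (s : Bool) {st : NFState}
    (h : IsNormalSyllables p q st.1) : pushStable p q (!s) (pushStable p q s st) = st := by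
  obtain ⟨ss, e⟩ := st
  have hb := modulus_pos hp hq s
  obtain ⟨r, m, hr, hrb, rfl⟩ : ∃ r m, 0 ≤ r ∧ r < modulus p q s ∧ e = r + modulus p q s * m :=
    ⟨_, _, Int.emod_nonneg e hb.ne', Int.emod_lt_of_pos e hb, (Int.emod_add_mul_ediv e _).symm⟩
  rw [pushStable_of_lt hp hq s hr hrb]
  cases ss with
  | nil => exact pushStable_not_cons hp hq s r m []
  | cons x ss =>
    obtain ⟨k, s'⟩ := x
    by_cases hpinch : r = 0 ∧ s' = !s
    · obtain ⟨rfl, rfl⟩ := hpinch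
      have hk := h.1 (k, !s) mem_cons_self
      rw [modulus_not] at hk
      have h' := pushStable_of_lt hp hq (!s) hk.1 (by rw [modulus_not]; exact hk.2) m ss
      rw [transfer_not, modulus_not, consSyllable_of_isChain h.2] at h'
      simp [consSyllable, h']
    · simp only [consSyllable, if_neg hpinch]
      exact pushStable_not_cons hp hq s r m _

abbrev NormalState (p q : ℤ) : Type := {st : NFState // IsNormalSyllables p q st.1}

def aPerm : Equiv.Perm (NormalState p q) where
  toFun st := ⟨(st.1.1, st.1.2 + 1), st.2⟩
  invFun st := ⟨(st.1.1, st.1.2 - 1), st.2⟩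
  left_inv st := Subtype.ext (by simp)
  right_inv st := Subtype.ext (by simp)

def tPerm (hp : 0 < p) (hq : 0 < q) : Equiv.Perm (NormalState p q) where
  toFun st := ⟨pushStable p q true st.1, st.2.pushStable hp hq true⟩
  invFun st := ⟨pushStable p q false st.1, st.2.pushStable hp hq false⟩
  left_inv st := Subtype.ext (pushStable_not_pushStable hp hq true st.2)
  right_inv st := Subtype.ext (pushStable_not_pushStable hp hq false st.2)

theorem aPerm_zpow_apply (n : ℤ) (st : NormalState p q) :
    ((aPerm ^ n) st).1 = (st.1.1, st.1.2 + n) := by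
  induction n using Int.induction_on generalizing st with
  | zero => simp
  | succ n ih =>
    rw [zpow_add_one, Equiv.Perm.mul_apply, ih]
    exact Prod.ext rfl (show st.1.2 + 1 + n = st.1.2 + (n + 1) by ring)
  | pred n ih =>
    rw [zpow_sub_one, Equiv.Perm.mul_apply, ih]
    exact Prod.ext rfl (show st.1.2 - 1 + -n = st.1.2 + (-n - 1) by ring)

/-- `ᵐᵒᵖ` because letters act on states on the right, as in `nfState`. -/
def generatorPerm (hp : 0 < p) (hq : 0 < q) : Bool → (Equiv.Perm (NormalState p q))ᵐᵒᵖ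
  | true => .op (tPerm hp hq)
  | false => .op aPerm

theorem lift_generatorPerm_bsRel (hp : 0 < p) (hq : 0 < q) :
    ∀ r ∈ bsRel p q, FreeGroup.lift (generatorPerm hp hq) r = 1 := by
  rintro _ rfl
  apply MulOpposite.unop_injective
  simp only [map_mul, map_inv, map_zpow, FreeGroup.lift_apply_of, generatorPerm,
    MulOpposite.unop_mul, MulOpposite.unop_inv, MulOpposite.unop_zpow, MulOpposite.unop_op,
    MulOpposite.unop_one]
  refine Equiv.ext fun st => Subtype.ext ?_
  have hconj : ((tPerm hp hq)⁻¹ ((aPerm ^ p) (tPerm hp hq st))).1 = (st.1.1, st.1.2 + q) := by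
    change pushStable p q false ((aPerm ^ p) (tPerm hp hq st)).1 = _
    rw [aPerm_zpow_apply]
    refine (pushStable_add_modulus hp hq false _ _).trans ?_
    have hback : pushStable p q false (tPerm hp hq st).1 = st.1 :=
      pushStable_not_pushStable hp hq true st.2
    rw [Prod.mk.eta, hback]
    rfl
  rw [Equiv.Perm.mul_apply, Equiv.Perm.mul_apply, Equiv.Perm.mul_apply, aPerm_zpow_apply, hconj]
  simp

def stateAction (hp : 0 < p) (hq : 0 < q) : BS p q →* (Equiv.Perm (NormalState p q))ᵐᵒᵖ :=
  PresentedGroup.toGroup (lift_generatorPerm_bsRel hp hq)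

theorem stateAction_evalLetter (hp : 0 < p) (hq : 0 < q) (c : Letter) (st : NormalState p q) :
    ((stateAction hp hq (evalLetter p q c)).unop st).1 = pushLetter p q st.1 c := by
  cases c <;> simp [stateAction, evalLetter, PresentedGroup.toGroup.of, generatorPerm] <;> rfl

theorem stateAction_eval (hp : 0 < p) (hq : 0 < q) (w : List Letter) (st : NormalState p q) :
    ((stateAction hp hq (eval p q w)).unop st).1 = w.foldl (pushLetter p q) st.1 := by
  induction w generalizing st with
  | nil => rfl
  | cons c w ih =>
    rw [eval_cons, map_mul, MulOpposite.unop_mul, Equiv.Perm.mul_apply, ih,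
      stateAction_evalLetter, foldl_cons]

theorem nfState_eq_of_eval_eq (hp : 0 < p) (hq : 0 < q) {u v : List Letter}
    (h : eval p q u = eval p q v) : nfState p q u = nfState p q v := by
  let init : NormalState p q := ⟨([], 0), by simp [IsNormalSyllables]⟩
  have h' := congrArg (fun g => ((stateAction hp hq g).unop init).1) h
  simp only [stateAction_eval] at h'
  exact h'

end Action

theorem bs_rewriting_confluent (p q : ℤ) (hp : 1 ≤ p) (hpq : p < q) :
    (∀ w u v : List Letter, Relation.ReflTransGen (Step p q) w u →
      Relation.ReflTransGen (Step p q) w v →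
      ∃ z, Relation.ReflTransGen (Step p q) u z ∧ Relation.ReflTransGen (Step p q) v z) ∧
    (∀ u v : List Letter, eval p q u = eval p q v ↔
      ∃ z, Relation.ReflTransGen (Step p q) u z ∧ Relation.ReflTransGen (Step p q) v z) := by
  have hp' : 0 < p := by omega
  have hq : 0 < q := by omega
  have joinable_of_eval_eq (u v : List Letter) (h : eval p q u = eval p q v) :
      ∃ z, ReflTransGen (Step p q) u z ∧ ReflTransGen (Step p q) v z :=
    ⟨normalForm p q u, reflTransGen_normalForm hp' hq u, by
      rw [normalForm, nfState_eq_of_eval_eq hp' hq h]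
      exact reflTransGen_normalForm hp' hq v⟩
  refine ⟨fun w u v hu hv => joinable_of_eval_eq u v ?_, fun u v => ⟨joinable_of_eval_eq u v, ?_⟩⟩
  · exact (eval_eq_of_reflTransGen hp' hq hu).symm.trans (eval_eq_of_reflTransGen hp' hq hv)
  · rintro ⟨z, hu, hv⟩
    exact (eval_eq_of_reflTransGen hp' hq hu).trans (eval_eq_of_reflTransGen hp' hq hv).symm
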